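/- arXiv:1002.4510 — 2 statements merged into one kernel-verified Lean document; each statement's English description precedes it below -/
import Mathlib

section
/- Let q ≥ 3 be a prime power, let 3 ≤ n ≤ q, and let a_1, …, a_n be n distinct elements of 𝔽_q. Let C be the Latin-square code C = {x ∈ 𝔽_q^n : x_1+⋯+x_n = 0 and a_1x_1+⋯+a_nx_n = 0}. Then C is a linear [n, n−2, 3]_q code, it is completely regular with covering radius 2, its dual C⊥ is antipodal, and its intersection array is (n(q−1), (q−n+1)(n−1); 1, n(n−1)). -/
open Finset

variable {F : Type*} [Field F] [Fintype F] [DecidableEq F]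

/-- The Hamming distance from a vector to a code. -/
noncomputable def distToCode {ι : Type*} [Fintype ι] (C : Set (ι → F)) (x : ι → F) : ℕ :=
  sInf {d : ℕ | ∃ c ∈ C, hammingDist x c = d}

/-- The covering radius of a code: the maximal distance of a vector to the code. -/
noncomputable def coveringRadius {ι : Type*} [Fintype ι] (C : Set (ι → F)) : ℕ :=
  sSup {d : ℕ | ∃ x : ι → F, distToCode C x = d}

/-- `C` has intersection numbers `b l` (number of neighbours one step further from the code)
and `c l` (number of neighbours one step closer to the code), for every `x` at distance `l`. -/
def HasIntersectionNumbers {ι : Type*} [Fintype ι] (C : Set (ι → F)) (b c : ℕ → ℕ) : Prop :=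
  ∀ l : ℕ, ∀ x : ι → F, distToCode C x = l →
    Nat.card {y : ι → F | hammingDist x y = 1 ∧ distToCode C y = l + 1} = b l ∧
    Nat.card {y : ι → F | hammingDist x y = 1 ∧ distToCode C y + 1 = l} = c l

/-- A code is completely regular if it admits intersection numbers. -/
def IsCompletelyRegular {ι : Type*} [Fintype ι] (C : Set (ι → F)) : Prop :=
  ∃ b c : ℕ → ℕ, HasIntersectionNumbers C b c

/-- The minimum distance of a code. -/
noncomputable def minDist {ι : Type*} [Fintype ι] (C : Set (ι → F)) : ℕ :=
  sInf {d : ℕ | ∃ x ∈ C, ∃ y ∈ C, x ≠ y ∧ hammingDist x y = d}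

/-- A code is equidistant if any two distinct codewords are at the same Hamming distance. -/
def IsEquidistant {ι : Type*} [Fintype ι] (C : Set (ι → F)) : Prop :=
  ∃ d : ℕ, ∀ x ∈ C, ∀ y ∈ C, x ≠ y → hammingDist x y = d

/-- The dual of a code, with respect to the standard bilinear form. -/
def dualSet {ι : Type*} [Fintype ι] (C : Set (ι → F)) : Set (ι → F) :=
  {y | ∀ x ∈ C, ∑ i, x i * y i = 0}

/-- A code of length `n` is antipodal if it contains a word of Hamming weight `n`. -/
def IsAntipodal {ι : Type*} [Fintype ι] (C : Set (ι → F)) : Prop :=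
  ∃ v ∈ C, hammingNorm v = Fintype.card ι

/-- A monomial transformation: a coordinate permutation composed with multiplication of
each coordinate by a nonzero scalar. -/
def IsMonomialMap {ι : Type*} (φ : (ι → F) → (ι → F)) : Prop :=
  ∃ (π : Equiv.Perm ι) (s : ι → Fˣ), ∀ x i, φ x i = (s i : F) * x (π i)

/-- Two codes are monomially equivalent if one is the image of the other under a bijection of
coordinates together with multiplication of each coordinate by a nonzero scalar. -/
def MonomiallyEquivalent {ι κ : Type*} (C : Set (ι → F)) (D : Set (κ → F)) : Prop :=
  ∃ (e : ι ≃ κ) (s : ι → Fˣ),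
    (fun (x : ι → F) (j : κ) => (s (e.symm j) : F) * x (e.symm j)) '' C = D

/-- The orbit, under the action of `Aut C` on the cosets of `C`, of the coset of `v`
(realised as the union of all cosets in the orbit). -/
def cosetOrbit {ι : Type*} (C : Submodule F (ι → F)) (v : ι → F) : Set (ι → F) :=
  {w | ∃ φ : (ι → F) → (ι → F), IsMonomialMap φ ∧
    φ '' (C : Set (ι → F)) = (C : Set (ι → F)) ∧ φ v - w ∈ C}

/-- The number of orbits of the action of `Aut C` on the cosets of `C`. -/
noncomputable def numCosetOrbits {ι : Type*} (C : Submodule F (ι → F)) : ℕ :=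
  Nat.card (Set.range (cosetOrbit C))

/-- `H` is a `q`-ary Hamming code with parameter `m ≥ 2`: a perfect
`[(q^m-1)/(q-1), (q^m-1)/(q-1) - m, 3]_q` code with covering radius 1. -/
def IsHammingCode (m : ℕ) {nm : ℕ} (H : Submodule F (Fin nm → F)) : Prop :=
  2 ≤ m ∧ nm = (Fintype.card F ^ m - 1) / (Fintype.card F - 1) ∧
  Module.finrank F H = nm - m ∧ minDist (H : Set (Fin nm → F)) = 3 ∧
  coveringRadius (H : Set (Fin nm → F)) = 1

/-- The extended code: append an overall parity-check coordinate. -/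
def extendedCode {m : ℕ} (D : Set (Fin m → F)) : Set (Fin (m + 1) → F) :=
  {z | (fun i : Fin m => z i.castSucc) ∈ D ∧ ∑ i, z i = 0}

/-- Construction I(u): append `u` free coordinates to every codeword. -/
def appendCode (u : ℕ) {n : ℕ} (C : Set (Fin n → F)) : Set (Fin (n + u) → F) :=
  {z | ∃ c ∈ C, ∃ y : Fin u → F, z = Fin.append c y}

/-- Construction II(ℓ): codewords are `ℓ`-tuples of blocks whose `λ`-weighted sum lies in `C`. -/
def repeatCode {n ℓ : ℕ} (lam : Fin ℓ → Fˣ) (C : Set (Fin n → F)) :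
    Set (Fin ℓ × Fin n → F) :=
  {z | (fun j : Fin n => ∑ i : Fin ℓ, (lam i : F) * z (i, j)) ∈ C}

/-- The code `{(x₁|⋯|x_ℓ|y) : x₁+⋯+x_ℓ ∈ H, y free}` built from a code `H`. -/
def hammingRepeatCode {nm : ℕ} (ℓ u : ℕ) (H : Set (Fin nm → F)) :
    Set ((Fin ℓ × Fin nm) ⊕ Fin u → F) :=
  {z | (fun j : Fin nm => ∑ i : Fin ℓ, z (Sum.inl (i, j))) ∈ H}

/-!
The code is the kernel of the parity-check map `x ↦ (∑ xᵢ, ∑ aᵢ xᵢ)`, whose columns `(1, aᵢ)`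
are pairwise linearly independent and hence span `K²`. So the distance from `x` to the code
depends only on the syndrome `v` of `x`: it is `0` if `v = 0`, `1` if `v` is a nonzero multiple of
a column, and `2` otherwise. Changing the `i`-th coordinate of `x` moves `v` along the line
`v + K • (1, aᵢ)`; when `v` is off the line `K • (1, aᵢ)`, this line meets each of the other
`n - 1` lines `K • (1, aⱼ)` exactly once, and counting these meeting points gives every
intersection number.
-/

section Hamming

variable {ι β : Type*} [Fintype ι]

theorem hammingNorm_add_le [AddZeroClass β] [DecidableEq β] (x y : ι → β) :
    hammingNorm (x + y) ≤ hammingNorm x + hammingNorm y := by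
  classical
  refine (card_le_card fun i hi => ?_).trans (card_union_le _ _)
  simp only [mem_filter, mem_univ, true_and, mem_union] at hi ⊢
  by_contra! h
  exact hi (by simp [h.1, h.2])

variable [DecidableEq ι]

theorem hammingNorm_single_le [Zero β] [DecidableEq β] (i : ι) (b : β) :
    hammingNorm (Pi.single i b : ι → β) ≤ 1 := by
  refine (card_le_card fun j hj => ?_).trans (card_singleton i).le
  by_contra hji
  simp_all [Pi.single_apply]

theorem hammingNorm_eq_one_iff [Zero β] [DecidableEq β] {x : ι → β} :
    hammingNorm x = 1 ↔ ∃ i b, b ≠ 0 ∧ x = Pi.single i b := by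
  constructor
  · intro h
    obtain ⟨i, hi⟩ := card_eq_one.mp h
    have hsupp : ∀ j, x j ≠ 0 ↔ j = i := fun j => by
      simpa using congrArg (j ∈ ·) hi
    refine ⟨i, x i, (hsupp i).2 rfl, funext fun j => ?_⟩
    by_cases hji : j = i
    · subst hji; simp
    · simpa [hji] using mt (hsupp j).1 hji
  · rintro ⟨i, b, hb, rfl⟩
    refine card_eq_one.mpr ⟨i, ?_⟩
    ext j
    by_cases hji : j = i <;> simp [hji, hb]

theorem hammingNorm_le_one_iff [Nonempty ι] [Zero β] [DecidableEq β] {x : ι → β} :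
    hammingNorm x ≤ 1 ↔ ∃ i b, x = Pi.single i b := by
  refine ⟨fun h => ?_, fun ⟨i, b, hx⟩ => hx ▸ hammingNorm_single_le i b⟩
  rcases Nat.le_one_iff_eq_zero_or_eq_one.mp h with h0 | h1
  · exact ⟨Classical.arbitrary ι, 0, by simpa using h0⟩
  · obtain ⟨i, b, -, hx⟩ := hammingNorm_eq_one_iff.mp h1
    exact ⟨i, b, hx⟩

theorem hammingNorm_sub_single_lt [AddGroup β] [DecidableEq β] {x : ι → β} {i : ι}
    (hi : x i ≠ 0) : hammingNorm (x - Pi.single i (x i)) < hammingNorm x := by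
  refine card_lt_card ((ssubset_iff_of_subset fun j hj => ?_).mpr ⟨i, ?_, ?_⟩)
  · by_cases hji : j = i
    · simp [hji] at hj
    · simpa [hji] using hj
  · simpa using hi
  · simp

theorem hammingDist_eq_one_iff [AddGroup β] [DecidableEq β] {x y : ι → β} :
    hammingDist x y = 1 ↔ ∃ i b, b ≠ 0 ∧ y = x + Pi.single i b := by
  simp only [hammingDist_eq_hammingNorm, hammingNorm_eq_one_iff, neg_add_eq_iff_eq_add]

theorem card_neighbors_eq_sum [AddGroup β] [Fintype β] [DecidableEq β] (x : ι → β)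
    (P : (ι → β) → Prop) [DecidablePred P] :
    Nat.card {y | hammingDist x y = 1 ∧ P y} =
      ∑ i, #{b : β | b ≠ 0 ∧ P (x + Pi.single i b)} := by
  set S : Finset (ι × β) := {p | p.2 ≠ 0 ∧ P (x + Pi.single p.1 p.2)}
  have hinj : Set.InjOn (fun p : ι × β => x + Pi.single p.1 p.2) S := by
    rintro ⟨i, b⟩ hb ⟨j, c⟩ - h
    have hb0 : b ≠ 0 := (mem_filter.mp hb).2.1
    have hij : i = j := by
      by_contra hij
      simpa [Pi.single_apply, hij, hb0] using congrFun h i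
    subst hij
    simpa using h
  have hset : {y | hammingDist x y = 1 ∧ P y} =
      ((S.image fun p => x + Pi.single p.1 p.2) : Set _) := by
    ext y
    simp only [hammingDist_eq_one_iff, Set.mem_ofPred_eq, coe_image, coe_filter, Set.mem_image,
      Prod.exists, mem_univ, true_and, S]
    constructor
    · rintro ⟨⟨i, b, hb, rfl⟩, hP⟩
      exact ⟨i, b, ⟨hb, hP⟩, rfl⟩
    · rintro ⟨i, b, ⟨hb, hP⟩, rfl⟩
      exact ⟨⟨i, b, hb, rfl⟩, hP⟩
  rw [hset, Nat.card_coe_set_eq, Set.ncard_coe_finset, card_image_of_injOn hinj, card_filter,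
    Fintype.sum_prod_type]
  simp only [card_filter]

end Hamming

section CodeInvariants

variable {α ι : Type*} [DecidableEq α] [Fintype ι] {C : Set (ι → α)} {x : ι → α}

theorem distToCode_le_hammingDist {c : ι → α} (hc : c ∈ C) : distToCode C x ≤ hammingDist x c := by
  apply Nat.sInf_le
  exact ⟨c, hc, rfl⟩

theorem exists_hammingDist_eq_distToCode (hC : C.Nonempty) :
    ∃ c ∈ C, hammingDist x c = distToCode C x := by
  obtain ⟨c, hc⟩ := hC
  exact Nat.sInf_mem (s := {d | ∃ c ∈ C, hammingDist x c = d}) ⟨_, c, hc, rfl⟩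

theorem distToCode_le_iff (hC : C.Nonempty) {w : ℕ} :
    distToCode C x ≤ w ↔ ∃ c ∈ C, hammingDist x c ≤ w := by
  refine ⟨fun h => ?_, fun ⟨c, hc, h⟩ => (distToCode_le_hammingDist hc).trans h⟩
  obtain ⟨c, hc, hxc⟩ := exists_hammingDist_eq_distToCode (x := x) hC
  exact ⟨c, hc, hxc ▸ h⟩

theorem distToCode_eq_zero_iff (hC : C.Nonempty) : distToCode C x = 0 ↔ x ∈ C := by
  rw [← Nat.le_zero, distToCode_le_iff hC]
  simp

theorem coveringRadius_eq_of_isGreatest {r : ℕ} (h : IsGreatest (Set.range (distToCode C)) r) :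
    coveringRadius C = r :=
  h.csSup_eq

theorem HasIntersectionNumbers.unique {b c b' c' : ℕ → ℕ} {l : ℕ}
    (h : HasIntersectionNumbers C b c) (h' : HasIntersectionNumbers C b' c')
    (hx : distToCode C x = l) : b l = b' l ∧ c l = c' l :=
  ⟨(h l x hx).1.symm.trans (h' l x hx).1, (h l x hx).2.symm.trans (h' l x hx).2⟩

end CodeInvariants

section LinearCode

variable {R ι : Type*} [Ring R] [DecidableEq R] [Fintype ι]

theorem distToCode_ker_le_iff {M : Type*} [AddCommGroup M] [Module R M]
    (H : (ι → R) →ₗ[R] M) {x : ι → R} {w : ℕ} :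
    distToCode (LinearMap.ker H : Set (ι → R)) x ≤ w ↔ ∃ e, H e = H x ∧ hammingNorm e ≤ w := by
  rw [distToCode_le_iff ⟨0, (LinearMap.ker H).zero_mem⟩]
  constructor
  · rintro ⟨c, hc, h⟩
    refine ⟨x - c, by simp [LinearMap.mem_ker.mp hc], ?_⟩
    rwa [hammingDist_comm, hammingDist_eq_hammingNorm, neg_add_eq_sub] at h
  · rintro ⟨e, he, h⟩
    refine ⟨x - e, by simp [he], ?_⟩
    rwa [hammingDist_comm, hammingDist_eq_hammingNorm, neg_sub, sub_add_cancel]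

theorem minDist_eq_of_forall_le_hammingNorm (C : Submodule R (ι → R)) {d : ℕ}
    (hle : ∀ c ∈ C, c ≠ 0 → d ≤ hammingNorm c) (hex : ∃ c ∈ C, c ≠ 0 ∧ hammingNorm c ≤ d) :
    minDist (C : Set (ι → R)) = d := by
  obtain ⟨c, hc, hc0, hcd⟩ := hex
  have hmem : hammingNorm c ∈ {d : ℕ | ∃ x ∈ (C : Set (ι → R)), ∃ y ∈ (C : Set (ι → R)),
      x ≠ y ∧ hammingDist x y = d} := ⟨c, hc, 0, C.zero_mem, hc0, hammingDist_zero_right c⟩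
  refine le_antisymm ((Nat.sInf_le hmem).trans hcd) (le_csInf ⟨_, hmem⟩ ?_)
  rintro _ ⟨x, hx, y, hy, hxy, rfl⟩
  rw [hammingDist_eq_hammingNorm, neg_add_eq_sub]
  exact hle _ (C.sub_mem hy hx) (sub_ne_zero.mpr hxy.symm)

end LinearCode

namespace LatinSquare

section Syndrome

variable {K ι : Type*} [Field K] {a : ι → K}

def column (a : ι → K) (i : ι) : K × K := (1, a i)

theorem smul_column_eq_zero_iff {δ : K} {i : ι} : δ • column a i = 0 ↔ δ = 0 :=
  ⟨fun h => by simpa [column] using congrArg Prod.fst h, fun h => by rw [h, zero_smul]⟩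

theorem linearIndependent_column_pair (ha : Function.Injective a) {i j : ι} (hij : i ≠ j) :
    LinearIndependent K ![column a i, column a j] := by
  rw [LinearIndependent.pair_iff]
  intro s t hst
  simp only [column, Prod.smul_mk, smul_eq_mul, mul_one, Prod.mk_add_mk, Prod.mk_eq_zero] at hst
  have hs : s = 0 := (mul_eq_zero.mp (by linear_combination hst.2 - a j * hst.1 :
    s * (a i - a j) = 0)).resolve_right (sub_ne_zero.mpr (ha.ne hij))
  exact ⟨hs, by linear_combination hst.1 - hs⟩

theorem exists_smul_column_add_smul_column_eq (ha : Function.Injective a) {i j : ι}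
    (hij : i ≠ j) (v : K × K) : ∃ δ ε : K, δ • column a i + ε • column a j = v := by
  have hij' : a i - a j ≠ 0 := sub_ne_zero.mpr (ha.ne hij)
  refine ⟨(v.2 - a j * v.1) / (a i - a j), v.1 - (v.2 - a j * v.1) / (a i - a j), ?_⟩
  ext
  · simp [column]
  · simp only [column, Prod.snd_add, Prod.smul_snd, smul_eq_mul]
    field_simp
    ring

/-- `v` lies on the line spanned by one of the columns `(1, a i)`. -/
def IsColumnMultiple (a : ι → K) (v : K × K) : Prop := ∃ i, v.2 = a i * v.1

theorem isColumnMultiple_iff {v : K × K} :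
    IsColumnMultiple a v ↔ ∃ i, ∃ δ : K, δ • column a i = v := by
  constructor
  · rintro ⟨i, hi⟩
    exact ⟨i, v.1, by ext <;> simp [column, hi, mul_comm]⟩
  · rintro ⟨i, δ, rfl⟩
    exact ⟨i, by simp [column, mul_comm]⟩

theorem isColumnMultiple_smul_column (i : ι) (δ : K) : IsColumnMultiple a (δ • column a i) :=
  isColumnMultiple_iff.mpr ⟨i, δ, rfl⟩

variable [Fintype ι]

instance [DecidableEq K] (a : ι → K) : DecidablePred (IsColumnMultiple a) := fun v =>
  inferInstanceAs (Decidable (∃ i, v.2 = a i * v.1))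

def checkMap (a : ι → K) : (ι → K) →ₗ[K] K × K := Fintype.linearCombination K (column a)

def code (a : ι → K) : Submodule K (ι → K) := LinearMap.ker (checkMap a)

theorem checkMap_apply (x : ι → K) : checkMap a x = (∑ i, x i, ∑ i, a i * x i) := by
  ext <;> simp [checkMap, Fintype.linearCombination_apply, column, Prod.fst_sum, Prod.snd_sum,
    mul_comm]

theorem mem_code_iff {x : ι → K} : x ∈ code a ↔ (∑ i, x i) = 0 ∧ ∑ i, a i * x i = 0 := by
  rw [code, LinearMap.mem_ker, checkMap_apply, Prod.mk_eq_zero]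

theorem isAntipodal_dualSet_code [DecidableEq K] (a : ι → K) :
    IsAntipodal (dualSet (code a : Set (ι → K))) :=
  ⟨fun _ => 1, fun x hx => by simpa using (mem_code_iff.mp hx).1, by simp [hammingNorm]⟩

variable [DecidableEq ι]

theorem checkMap_single (i : ι) (δ : K) : checkMap a (Pi.single i δ) = δ • column a i :=
  Fintype.linearCombination_apply_single K (column a) i δ

theorem checkMap_surjective (ha : Function.Injective a) (hι : 1 < Fintype.card ι) :
    Function.Surjective (checkMap a) := by
  obtain ⟨i, j, hij⟩ := Fintype.exists_pair_of_one_lt_card hι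
  intro v
  obtain ⟨δ, ε, hv⟩ := exists_smul_column_add_smul_column_eq ha hij v
  exact ⟨Pi.single i δ + Pi.single j ε, by rw [map_add, checkMap_single, checkMap_single, hv]⟩

theorem finrank_code (ha : Function.Injective a) (hι : 1 < Fintype.card ι) :
    Module.finrank K (code a) = Fintype.card ι - 2 := by
  have h := LinearMap.finrank_range_add_finrank_ker (checkMap a)
  rw [LinearMap.range_eq_top.mpr (checkMap_surjective ha hι), finrank_top, Module.finrank_prod,
    Module.finrank_self, Module.finrank_fintype_fun_eq_card] at h
  rw [code]
  omega

end Syndrome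

section Distance

variable {K ι : Type*} [Field K] [DecidableEq K] [Fintype ι] {a : ι → K} {x : ι → K}

theorem distToCode_code_eq_zero_iff :
    distToCode (code a : Set (ι → K)) x = 0 ↔ checkMap a x = 0 :=
  distToCode_eq_zero_iff ⟨0, (code a).zero_mem⟩

variable [DecidableEq ι]

theorem distToCode_code_le_one_iff [Nonempty ι] :
    distToCode (code a : Set (ι → K)) x ≤ 1 ↔ IsColumnMultiple a (checkMap a x) := by
  rw [code, distToCode_ker_le_iff, isColumnMultiple_iff]
  constructor
  · rintro ⟨e, he, hw⟩
    obtain ⟨i, δ, rfl⟩ := hammingNorm_le_one_iff.mp hw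
    exact ⟨i, δ, by rw [← checkMap_single, he]⟩
  · rintro ⟨i, δ, h⟩
    exact ⟨Pi.single i δ, by rw [checkMap_single, h], hammingNorm_single_le i δ⟩

theorem distToCode_code_le_two (ha : Function.Injective a) (hι : 1 < Fintype.card ι)
    (x : ι → K) : distToCode (code a : Set (ι → K)) x ≤ 2 := by
  obtain ⟨i, j, hij⟩ := Fintype.exists_pair_of_one_lt_card hι
  obtain ⟨δ, ε, h⟩ := exists_smul_column_add_smul_column_eq ha hij (checkMap a x)
  rw [code, distToCode_ker_le_iff]
  exact ⟨Pi.single i δ + Pi.single j ε, by rw [map_add, checkMap_single, checkMap_single, h],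
    (hammingNorm_add_le _ _).trans
      (add_le_add (hammingNorm_single_le i δ) (hammingNorm_single_le j ε))⟩

theorem distToCode_code_eq_one_iff [Nonempty ι] :
    distToCode (code a : Set (ι → K)) x = 1 ↔
      checkMap a x ≠ 0 ∧ IsColumnMultiple a (checkMap a x) := by
  rw [ne_eq, ← distToCode_code_eq_zero_iff, ← distToCode_code_le_one_iff]
  omega

theorem distToCode_code_eq_two_iff (ha : Function.Injective a) (hι : 1 < Fintype.card ι) :
    distToCode (code a : Set (ι → K)) x = 2 ↔ ¬IsColumnMultiple a (checkMap a x) := by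
  have : Nonempty ι := Fintype.card_pos_iff.mp (by omega)
  have := distToCode_code_le_two ha hι x
  rw [← distToCode_code_le_one_iff]
  omega

theorem exists_distToCode_code_eq (ha : Function.Injective a) (hι : 1 < Fintype.card ι) {l : ℕ}
    (hl : l ≤ 2) : ∃ x, distToCode (code a : Set (ι → K)) x = l := by
  have : Nonempty ι := Fintype.card_pos_iff.mp (by omega)
  let i := Classical.arbitrary ι
  interval_cases l
  · exact ⟨0, distToCode_code_eq_zero_iff.mpr (map_zero _)⟩
  · refine ⟨Pi.single i 1, distToCode_code_eq_one_iff.mpr ?_⟩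
    rw [checkMap_single]
    exact ⟨smul_column_eq_zero_iff.not.mpr one_ne_zero, isColumnMultiple_smul_column i 1⟩
  · obtain ⟨x, hx⟩ := checkMap_surjective ha hι (0, 1)
    refine ⟨x, (distToCode_code_eq_two_iff ha hι).mpr ?_⟩
    rintro ⟨j, hj⟩
    simp [hx] at hj

/-- Deleting a nonzero coordinate of a codeword of weight `≤ 2` leaves a vector of weight `≤ 1`,
which would give a dependence between at most two columns. -/
theorem three_le_hammingNorm_of_mem_code (ha : Function.Injective a) {c : ι → K}
    (hc : c ∈ code a) (hc0 : c ≠ 0) : 3 ≤ hammingNorm c := by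
  obtain ⟨i, hci⟩ := Function.ne_iff.mp hc0
  by_contra! h
  have : Nonempty ι := ⟨i⟩
  have hy : hammingNorm (c - Pi.single i (c i)) ≤ 1 := by
    have := hammingNorm_sub_single_lt hci
    omega
  obtain ⟨j, b, hy⟩ := hammingNorm_le_one_iff.mp hy
  have hσ : b • column a j + c i • column a i = 0 := by
    rw [← checkMap_single, ← checkMap_single, ← map_add, ← hy, sub_add_cancel]
    exact hc
  by_cases hji : j = i
  · subst hji
    have hb : b = 0 := by simpa using (congrFun hy j).symm
    rw [hb, zero_smul, zero_add, smul_column_eq_zero_iff] at hσ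
    exact hci hσ
  · exact hci (LinearIndependent.pair_iff.mp (linearIndependent_column_pair ha hji) _ _ hσ).2

theorem minDist_code (ha : Function.Injective a) (hι : 2 < Fintype.card ι) :
    minDist (code a : Set (ι → K)) = 3 := by
  refine minDist_eq_of_forall_le_hammingNorm _ (fun c hc hc0 =>
    three_le_hammingNorm_of_mem_code ha hc hc0) ?_
  obtain ⟨i, j, k, hij, hik, hjk⟩ := Fintype.two_lt_card_iff.mp hι
  obtain ⟨δ, ε, h⟩ := exists_smul_column_add_smul_column_eq ha hij (column a k)
  refine ⟨Pi.single i δ + Pi.single j ε + Pi.single k (-1), ?_, fun h0 => ?_, ?_⟩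
  · rw [code, LinearMap.mem_ker, map_add, map_add, checkMap_single, checkMap_single,
      checkMap_single, h, neg_one_smul, add_neg_cancel]
  · simpa [hik.symm, hjk.symm] using congrFun h0 k
  · have h₁ := hammingNorm_add_le (Pi.single i δ + Pi.single j ε) (Pi.single k (-1 : K))
    have h₂ := hammingNorm_add_le (Pi.single i δ) (Pi.single j ε)
    have hi := hammingNorm_single_le i δ
    have hj := hammingNorm_single_le j ε
    have hk := hammingNorm_single_le k (-1 : K)
    omega

theorem coveringRadius_code (ha : Function.Injective a) (hι : 1 < Fintype.card ι) :
    coveringRadius (code a : Set (ι → K)) = 2 :=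
  coveringRadius_eq_of_isGreatest
    ⟨exists_distToCode_code_eq ha hι le_rfl,
      Set.forall_mem_range.mpr (distToCode_code_le_two ha hι)⟩

end Distance

section Neighbors

variable {K ι : Type*} [Field K] [Fintype K] [DecidableEq K] [Fintype ι] [DecidableEq ι]
  {a : ι → K}

theorem card_neighbors_code (x : ι → K) (Q : K × K → Prop) [DecidablePred Q] :
    Nat.card {y | hammingDist x y = 1 ∧ Q (checkMap a y)} =
      ∑ i, #{δ : K | δ ≠ 0 ∧ Q (checkMap a x + δ • column a i)} := by
  rw [card_neighbors_eq_sum]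
  simp only [map_add, checkMap_single]

/-- The line `v + K • column a i` meets the line through `column a j` (`j ≠ i`) at the parameter
`(a j * v.1 - v.2) / (a i - a j)`, and these parameters are distinct. -/
theorem card_filter_isColumnMultiple_add_smul_column (ha : Function.Injective a) {v : K × K}
    {i : ι} (hv : v.2 ≠ a i * v.1) :
    #{δ : K | IsColumnMultiple a (v + δ • column a i)} = Fintype.card ι - 1 := by
  have hsub : ∀ {j}, j ≠ i → a i - a j ≠ 0 := fun hj => sub_ne_zero.mpr (ha.ne hj.symm)
  have hfilter : ({δ | IsColumnMultiple a (v + δ • column a i)} : Finset K) =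
      (univ.erase i).image fun j => (a j * v.1 - v.2) / (a i - a j) := by
    ext δ
    simp only [IsColumnMultiple, column, mem_filter, mem_univ, true_and, mem_image, mem_erase,
      Prod.fst_add, Prod.snd_add, Prod.smul_fst, Prod.smul_snd, smul_eq_mul, mul_one, and_true]
    constructor
    · rintro ⟨j, hj⟩
      have hji : j ≠ i := by
        rintro rfl
        exact hv (by linear_combination hj)
      refine ⟨j, hji, ?_⟩
      rw [div_eq_iff (hsub hji)]
      linear_combination -hj
    · rintro ⟨j, hji, rfl⟩
      refine ⟨j, ?_⟩
      field_simp [hsub hji]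
      ring
  rw [hfilter, card_image_of_injOn, card_erase_of_mem (mem_univ i), card_univ]
  intro j hj k hk hjk
  have hji : j ≠ i := (mem_erase.mp hj).1
  have hki : k ≠ i := (mem_erase.mp hk).1
  rw [div_eq_div_iff (hsub hji) (hsub hki)] at hjk
  have h : (a j - a k) * (v.2 - a i * v.1) = 0 := by linear_combination -hjk
  exact ha (sub_eq_zero.mp ((mul_eq_zero.mp h).resolve_right (sub_ne_zero.mpr hv)))

theorem card_neighbors_farther_of_mem_code [Nonempty ι] {x : ι → K} (hx : x ∈ code a) :
    Nat.card {y | hammingDist x y = 1 ∧ distToCode (code a : Set (ι → K)) y = 1} =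
      Fintype.card ι * (Fintype.card K - 1) := by
  simp only [distToCode_code_eq_one_iff]
  rw [card_neighbors_code x fun v => v ≠ 0 ∧ IsColumnMultiple a v]
  have hσ : checkMap a x = 0 := hx
  have h : ∀ i, #{δ : K | δ ≠ 0 ∧ checkMap a x + δ • column a i ≠ 0 ∧
      IsColumnMultiple a (checkMap a x + δ • column a i)} = Fintype.card K - 1 := by
    intro i
    simp only [hσ, zero_add, ne_eq, smul_column_eq_zero_iff, isColumnMultiple_smul_column,
      and_true, and_self]
    rw [filter_ne', card_erase_of_mem (mem_univ 0), card_univ]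
  simp [h]

theorem card_neighbors_closer_of_distToCode_eq_one [Nonempty ι] (ha : Function.Injective a)
    {x : ι → K} (hx : distToCode (code a : Set (ι → K)) x = 1) :
    Nat.card {y | hammingDist x y = 1 ∧ distToCode (code a : Set (ι → K)) y + 1 = 1} = 1 := by
  obtain ⟨hσ0, hσ⟩ := distToCode_code_eq_one_iff.mp hx
  obtain ⟨k, s, hks⟩ := isColumnMultiple_iff.mp hσ
  have hs : s ≠ 0 := by rintro rfl; exact hσ0 (by rw [← hks, zero_smul])
  simp only [Nat.add_eq_right, distToCode_code_eq_zero_iff]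
  rw [card_neighbors_code x (· = 0), ← hks]
  have h : ∀ i, #{δ : K | δ ≠ 0 ∧ s • column a k + δ • column a i = 0} =
      if k = i then 1 else 0 := by
    intro i
    split_ifs with hki
    · subst hki
      refine card_eq_one.mpr ⟨-s, ?_⟩
      ext δ
      simp only [← add_smul, smul_column_eq_zero_iff, mem_filter, mem_univ, true_and,
        mem_singleton]
      constructor
      · rintro ⟨-, h⟩
        linear_combination h
      · rintro rfl
        exact ⟨neg_ne_zero.mpr hs, add_neg_cancel s⟩
    · refine card_eq_zero.mpr (filter_eq_empty_iff.mpr fun δ _ ⟨_, h⟩ => hs ?_)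
      exact (LinearIndependent.pair_iff.mp (linearIndependent_column_pair ha hki) _ _ h).1
  simp [h]

theorem card_neighbors_farther_of_distToCode_eq_one (ha : Function.Injective a)
    (hι : 1 < Fintype.card ι) {x : ι → K} (hx : distToCode (code a : Set (ι → K)) x = 1) :
    Nat.card {y | hammingDist x y = 1 ∧ distToCode (code a : Set (ι → K)) y = 2} =
      (Fintype.card K - Fintype.card ι + 1) * (Fintype.card ι - 1) := by
  have : Nonempty ι := Fintype.card_pos_iff.mp (by omega)
  obtain ⟨hσ0, hσ⟩ := distToCode_code_eq_one_iff.mp hx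
  obtain ⟨k, s, hks⟩ := isColumnMultiple_iff.mp hσ
  have hs : s ≠ 0 := by rintro rfl; exact hσ0 (by rw [← hks, zero_smul])
  simp only [distToCode_code_eq_two_iff ha hι]
  rw [card_neighbors_code x (¬IsColumnMultiple a ·), ← hks]
  have h : ∀ i, #{δ : K | δ ≠ 0 ∧ ¬IsColumnMultiple a (s • column a k + δ • column a i)} =
      if k = i then 0 else Fintype.card K - (Fintype.card ι - 1) := by
    intro i
    split_ifs with hki
    · subst hki
      refine card_eq_zero.mpr (filter_eq_empty_iff.mpr fun δ _ ⟨_, h⟩ => h ?_)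
      rw [← add_smul]
      exact isColumnMultiple_smul_column k _
    · have hv : (s • column a k).2 ≠ a i * (s • column a k).1 := by
        simp only [column, Prod.smul_mk, smul_eq_mul, mul_one]
        intro h
        exact hki (ha (mul_left_cancel₀ hs (by linear_combination h)))
      rw [← card_filter_isColumnMultiple_add_smul_column ha hv, ← card_univ,
        ← card_sdiff_of_subset (filter_subset _ _), ← filter_not]
      congr 1
      ext δ
      simp only [mem_filter, mem_univ, true_and, and_iff_right_iff_imp]
      rintro h rfl
      exact h (by rw [zero_smul, add_zero]; exact isColumnMultiple_smul_column k s)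
  have hnq := Fintype.card_le_of_injective a ha
  simp only [h, sum_ite, sum_const_zero, filter_ne, sum_const, mem_univ, card_erase_of_mem,
    card_univ, smul_eq_mul, zero_add]
  rw [mul_comm]
  congr 1
  omega

theorem card_neighbors_closer_of_distToCode_eq_two (ha : Function.Injective a)
    (hι : 1 < Fintype.card ι) {x : ι → K} (hx : distToCode (code a : Set (ι → K)) x = 2) :
    Nat.card {y | hammingDist x y = 1 ∧ distToCode (code a : Set (ι → K)) y + 1 = 2} =
      Fintype.card ι * (Fintype.card ι - 1) := by
  have : Nonempty ι := Fintype.card_pos_iff.mp (by omega)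
  have hσ := (distToCode_code_eq_two_iff ha hι).mp hx
  simp only [Nat.reduceEqDiff, distToCode_code_eq_one_iff]
  rw [card_neighbors_code x fun v => v ≠ 0 ∧ IsColumnMultiple a v]
  have h : ∀ i, #{δ : K | δ ≠ 0 ∧ checkMap a x + δ • column a i ≠ 0 ∧
      IsColumnMultiple a (checkMap a x + δ • column a i)} = Fintype.card ι - 1 := by
    intro i
    rw [← card_filter_isColumnMultiple_add_smul_column ha fun h => hσ ⟨i, h⟩]
    congr 1
    ext δ
    simp only [mem_filter, mem_univ, true_and]
    refine ⟨fun h => h.2.2, fun hcm => ⟨?_, fun h0 => hσ ?_, hcm⟩⟩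
    · rintro rfl
      exact hσ (by simpa using hcm)
    · rw [eq_neg_of_add_eq_zero_left h0, ← neg_smul]
      exact isColumnMultiple_smul_column i _
  simp [h]

def intersectionB (q n : ℕ) : ℕ → ℕ
  | 0 => n * (q - 1)
  | 1 => (q - n + 1) * (n - 1)
  | _ => 0

def intersectionC (n : ℕ) : ℕ → ℕ
  | 1 => 1
  | 2 => n * (n - 1)
  | _ => 0

theorem hasIntersectionNumbers (ha : Function.Injective a) (hι : 1 < Fintype.card ι) :
    HasIntersectionNumbers (code a : Set (ι → K)) (intersectionB (Fintype.card K) (Fintype.card ι))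
      (intersectionC (Fintype.card ι)) := by
  have : Nonempty ι := Fintype.card_pos_iff.mp (by omega)
  intro l x hx
  have hl : l ≤ 2 := hx ▸ distToCode_code_le_two ha hι x
  interval_cases l
  · exact ⟨card_neighbors_farther_of_mem_code (distToCode_code_eq_zero_iff.mp hx),
      by simp [intersectionC]⟩
  · exact ⟨card_neighbors_farther_of_distToCode_eq_one ha hι hx,
      card_neighbors_closer_of_distToCode_eq_one ha hx⟩
  · refine ⟨?_, card_neighbors_closer_of_distToCode_eq_two ha hι hx⟩
    have hfar : ∀ y, distToCode (code a : Set (ι → K)) y ≠ 2 + 1 := fun y =>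
      (Nat.lt_succ_of_le (distToCode_code_le_two ha hι y)).ne
    simp [hfar, intersectionB]

end Neighbors

end LatinSquare

theorem latin_square_code_general
    {F : Type*} [Field F] [Fintype F] [DecidableEq F] {n : ℕ}
    (hn : 3 ≤ n)
    (a : Fin n → F) (ha : Function.Injective a)
    (C : Submodule F (Fin n → F))
    (hC : ∀ x : Fin n → F, x ∈ C ↔
      ((∑ i, x i) = 0 ∧ (∑ i, a i * x i) = 0)) :
    Module.finrank F C = n - 2 ∧
    minDist (C : Set (Fin n → F)) = 3 ∧
    IsCompletelyRegular (C : Set (Fin n → F)) ∧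
    coveringRadius (C : Set (Fin n → F)) = 2 ∧
    IsAntipodal (dualSet (C : Set (Fin n → F))) ∧
    ∀ b c : ℕ → ℕ, HasIntersectionNumbers (C : Set (Fin n → F)) b c →
      b 0 = n * (Fintype.card F - 1) ∧
      b 1 = (Fintype.card F - n + 1) * (n - 1) ∧
      c 1 = 1 ∧
      c 2 = n * (n - 1) := by
  obtain rfl : C = LatinSquare.code a := by
    ext x
    rw [hC, LatinSquare.mem_code_iff]
  have hι : 2 < Fintype.card (Fin n) := by rwa [Fintype.card_fin]
  have hreg := LatinSquare.hasIntersectionNumbers ha hι.le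
  refine ⟨by simpa using LatinSquare.finrank_code ha hι.le, LatinSquare.minDist_code ha hι,
    ⟨_, _, hreg⟩, LatinSquare.coveringRadius_code ha hι.le, LatinSquare.isAntipodal_dualSet_code a,
    fun b c hbc => ?_⟩
  have hunique : ∀ l ≤ 2, b l = LatinSquare.intersectionB (Fintype.card F) n l ∧
      c l = LatinSquare.intersectionC n l := fun l hl => by
    obtain ⟨x, hx⟩ := LatinSquare.exists_distToCode_code_eq ha hι.le hl
    simpa using hbc.unique hreg hx
  exact ⟨(hunique 0 (by norm_num)).1, (hunique 1 (by norm_num)).1, (hunique 1 (by norm_num)).2,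
    (hunique 2 le_rfl).2⟩

/-- the Latin-square code `{x : Σxᵢ = 0, Σaᵢxᵢ = 0}` (with `a₁,…,a_n` distinct,
`3 ≤ n ≤ q`) is a `[n, n-2, 3]_q` code, completely regular with covering radius 2, with
antipodal dual and intersection array `(n(q-1), (q-n+1)(n-1); 1, n(n-1))`. -/
theorem latin_square_code
    {F : Type*} [Field F] [Fintype F] [DecidableEq F] {n : ℕ}
    (hq : 3 ≤ Fintype.card F) (hn : 3 ≤ n) (hnq : n ≤ Fintype.card F)
    (a : Fin n → F) (ha : Function.Injective a)
    (C : Submodule F (Fin n → F))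
    (hC : ∀ x : Fin n → F, x ∈ C ↔
      ((∑ i, x i) = 0 ∧ (∑ i, a i * x i) = 0)) :
    Module.finrank F C = n - 2 ∧
    minDist (C : Set (Fin n → F)) = 3 ∧
    IsCompletelyRegular (C : Set (Fin n → F)) ∧
    coveringRadius (C : Set (Fin n → F)) = 2 ∧
    IsAntipodal (dualSet (C : Set (Fin n → F))) ∧
    ∀ b c : ℕ → ℕ, HasIntersectionNumbers (C : Set (Fin n → F)) b c →
      b 0 = n * (Fintype.card F - 1) ∧
      b 1 = (Fintype.card F - n + 1) * (n - 1) ∧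
      c 1 = 1 ∧
      c 2 = n * (n - 1) :=
  latin_square_code_general hn a ha C hC
end

section
/- Let F ⊆ K be finite fields (K an extension field of F via a ring homomorphism ι : F → K), let H be an r × n matrix over F, let C = {x ∈ F^n : Hx = 0}, and let C' = {x ∈ K^n : ι(H)x = 0} be the lifted code, where ι(H) is the entrywise image of H in K. Then C is self-dual (C = C⊥ in F^n) if and only if C' is self-dual (C' = (C')⊥ in K^n). -/
open Finset

variable {F : Type*} [Field F] [Fintype F] [DecidableEq F]

/-!
`ker H` is self-dual iff it equals its dual, the row space of `H`, i.e. iff `H * Hᵀ = 0` and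
`2 * rank H = n`. Both conditions are unchanged by lifting to `K`: the first because `ι` is
injective, the second because a rank factorisation `H = A * B` with `P * A = 1` and `B * Q = 1`
maps to one over `K`.
-/

open Matrix LinearMap Module

namespace Matrix

variable {K L : Type*} [Field K] [Field L] {m n : Type*} [Fintype m] [Fintype n]

theorem exists_rank_factorization (M : Matrix m n K) :
    ∃ (A : Matrix m (Fin M.rank) K) (B : Matrix (Fin M.rank) n K)
      (P : Matrix (Fin M.rank) m K) (Q : Matrix n (Fin M.rank) K),
      A * B = M ∧ P * A = 1 ∧ B * Q = 1 := by
  classical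
  let e : LinearMap.range M.mulVecLin ≃ₗ[K] (Fin M.rank → K) :=
    LinearEquiv.ofFinrankEq _ _ (finrank_fin_fun K).symm
  let g := (LinearMap.range M.mulVecLin).subtype ∘ₗ e.symm.toLinearMap
  let h := e.toLinearMap ∘ₗ M.mulVecLin.rangeRestrict
  obtain ⟨g', hg'⟩ := g.exists_leftInverse_of_injective <|
    LinearMap.ker_eq_bot.2 ((Submodule.injective_subtype _).comp e.symm.injective)
  obtain ⟨h', hh'⟩ := h.exists_rightInverse_of_surjective <|
    LinearMap.range_eq_top.2 (e.surjective.comp M.mulVecLin.surjective_rangeRestrict)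
  refine ⟨toMatrix' g, toMatrix' h, toMatrix' g', toMatrix' h', ?_, ?_, ?_⟩
  · rw [← LinearMap.toMatrix'_comp]
    convert LinearMap.toMatrix'_toLin' M using 2
    ext x
    simp [g, h]
  · rw [← LinearMap.toMatrix'_comp, hg', LinearMap.toMatrix'_id]
  · rw [← LinearMap.toMatrix'_comp, hh', LinearMap.toMatrix'_id]

theorem rank_map (f : K →+* L) (M : Matrix m n K) : (M.map f).rank = M.rank := by
  obtain ⟨A, B, P, Q, hAB, hPA, hBQ⟩ := M.exists_rank_factorization
  have hPMQ : P * M * Q = 1 := calc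
    P * M * Q = P * (A * B) * Q := by rw [hAB]
    _ = P * A * (B * Q) := by simp only [Matrix.mul_assoc]
    _ = 1 := by rw [hPA, hBQ, Matrix.one_mul]
  apply le_antisymm
  · calc (M.map f).rank = (A.map f * B.map f).rank := by rw [← Matrix.map_mul, hAB]
      _ ≤ (A.map f).rank := rank_mul_le_left _ _
      _ ≤ M.rank := (rank_le_card_width _).trans_eq (Fintype.card_fin _)
  · calc M.rank = ((P * M * Q).map f).rank := by
          rw [hPMQ, Matrix.map_one _ f.map_zero f.map_one, rank_one, Fintype.card_fin]
      _ = (P.map f * M.map f * Q.map f).rank := by simp only [Matrix.map_mul]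
      _ ≤ (P.map f * M.map f).rank := rank_mul_le_left _ _
      _ ≤ (M.map f).rank := rank_mul_le_right _ _

variable {E : Type*} [Field E] {ι : Type*} [Fintype ι]

theorem dotProductBilin_isRefl :
    LinearMap.BilinForm.IsRefl (dotProductBilin E E : LinearMap.BilinForm E (ι → E)) :=
  fun x y h => by simpa [dotProduct_comm] using h

theorem dotProductBilin_nondegenerate :
    LinearMap.BilinForm.Nondegenerate (dotProductBilin E E : LinearMap.BilinForm E (ι → E)) :=
  ⟨dotProduct_eq_zero,
    fun y hy => dotProduct_eq_zero y fun x => dotProduct_comm x y ▸ hy x⟩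

theorem ker_mulVecLin_eq_orthogonal_range_transpose (M : Matrix m ι E) :
    ker M.mulVecLin =
      LinearMap.BilinForm.orthogonal (dotProductBilin E E) (range Mᵀ.mulVecLin) := by
  ext x
  simp only [mem_ker, mulVecLin_apply, LinearMap.BilinForm.mem_orthogonal_iff,
    LinearMap.mem_range, forall_exists_index, forall_apply_eq_imp_iff,
    dotProductBilin_apply_apply, mulVec_transpose, ← dotProduct_mulVec,
    dotProduct_comm _ (M *ᵥ x), dotProduct_eq_zero_iff]

theorem orthogonal_ker_mulVecLin (M : Matrix m ι E) :
    LinearMap.BilinForm.orthogonal (dotProductBilin E E) (ker M.mulVecLin) =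
      range Mᵀ.mulVecLin := by
  rw [ker_mulVecLin_eq_orthogonal_range_transpose,
    LinearMap.BilinForm.orthogonal_orthogonal dotProductBilin_nondegenerate dotProductBilin_isRefl]

theorem setOf_mulVec_eq_zero_eq_dualSet_iff (M : Matrix m ι E) :
    {x | M *ᵥ x = 0} = dualSet {x | M *ᵥ x = 0} ↔
      M * Mᵀ = 0 ∧ 2 * M.rank = Fintype.card ι := by
  classical
  have hrank_nullity : M.rank + finrank E (ker M.mulVecLin) = Fintype.card ι := by
    rw [Matrix.rank, LinearMap.finrank_range_add_finrank_ker, Module.finrank_fintype_fun_eq_card]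
  have hrow : finrank E (range Mᵀ.mulVecLin) = M.rank := M.rank_transpose
  have hle_iff : range Mᵀ.mulVecLin ≤ ker M.mulVecLin ↔ M * Mᵀ = 0 := by
    rw [range_le_ker_iff, ← mulVecLin_mul, ← toLin'_apply', LinearEquiv.map_eq_zero_iff]
  -- `dualSet` is, definitionally, the orthogonal complement for the dot product
  change (ker M.mulVecLin : Set (ι → E)) =
      LinearMap.BilinForm.orthogonal (dotProductBilin E E) (ker M.mulVecLin) ↔ _
  rw [orthogonal_ker_mulVecLin, SetLike.coe_set_eq, ← hle_iff]
  constructor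
  · intro h
    refine ⟨h ▸ le_rfl, ?_⟩
    rw [h, hrow] at hrank_nullity
    omega
  · rintro ⟨hle, hcard⟩
    exact (Submodule.eq_of_le_of_finrank_eq hle (by omega)).symm

end Matrix

theorem lifted_code_self_dual_general
    {F K : Type*} [Field F]
    [Field K] (ι : F →+* K)
    {r n : ℕ} (H : Matrix (Fin r) (Fin n) F) :
    ({x : Fin n → F | H.mulVec x = 0} = dualSet {x : Fin n → F | H.mulVec x = 0}) ↔
      ({x : Fin n → K | (H.map ι).mulVec x = 0} =
        dualSet {x : Fin n → K | (H.map ι).mulVec x = 0}) := by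
  rw [setOf_mulVec_eq_zero_eq_dualSet_iff, setOf_mulVec_eq_zero_eq_dualSet_iff, H.rank_map ι,
    ← transpose_map, ← Matrix.map_mul,
    (Matrix.map_injective ι.injective).eq_iff' (Matrix.map_zero ι ι.map_zero)]

/-- a code which is the kernel of a matrix `H` over `F` is self-dual iff the
lifted code (the kernel of `H` over an extension field `K`) is self-dual. -/
theorem lifted_code_self_dual
    {F K : Type*} [Field F] [Fintype F] [DecidableEq F]
    [Field K] [Fintype K] [DecidableEq K] (ι : F →+* K)
    {r n : ℕ} (H : Matrix (Fin r) (Fin n) F) :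
    ({x : Fin n → F | H.mulVec x = 0} = dualSet {x : Fin n → F | H.mulVec x = 0}) ↔
      ({x : Fin n → K | (H.map ι).mulVec x = 0} =
        dualSet {x : Fin n → K | (H.map ι).mulVec x = 0}) :=
  lifted_code_self_dual_general ι H
end
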